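/- Let Λ be the operator ΛH = (1+u)(1+zu)(H(z;u)−H(z;0))/u on ℚ[u][[z]]. For every m ≥ 1, the (m+1)-fold iterate satisfies z·Λ^{(m+1)}((1+u)/(1+zu)^{m+1}) = ((1+u)(1+zu)/u)·(1 − (1+zu)^{m+1}/(1+u)) − (1−z)^{m+2}. -/

import Mathlib

open Polynomial PowerSeries

/-- w = 1 + zu, as a power series in z with coefficients in ℚ[u]. -/
noncomputable def w : PowerSeries (Polynomial ℚ) :=
  1 + PowerSeries.X * PowerSeries.C (R := Polynomial ℚ) Polynomial.X

/-- The operator Λ : H(z;u) ↦ (1+u)(1+zu)(H(z;u) − H(z;0))/u, acting on ℚ[u][[z]]. -/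
noncomputable def Lam (H : PowerSeries (Polynomial ℚ)) : PowerSeries (Polynomial ℚ) :=
  PowerSeries.C (R := Polynomial ℚ) (1 + Polynomial.X) * w *
    PowerSeries.mk fun n =>
      (PowerSeries.coeff (R := Polynomial ℚ) n H
        - Polynomial.C ((PowerSeries.coeff (R := Polynomial ℚ) n H).eval 0)) /ₘ Polynomial.X

/-!
Write `v = 1/w` and `T F = w·(F + (F − F(z;0))/u)`, so that `Λ((1+u)F) = (1+u)·T F`.
The operator `T` is linear over the series free of `u`, `T 1 = w`, and it commutes with
multiplication by `v` and by `w` up to rank-one terms: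
`T (v F) = v·T F − z·F(z;0)` and `T (w F) = w·T F + z w·F(z;0)`.
Hence `T^k(v^(k+d))` is a Laurent polynomial in `w` whose coefficients in ℚ[[z]] form a
two-index array governed by a prefix-sum recursion. On the diagonal `d = 0` the coefficient
of `w^e` is `(1-z)^(n-e) - 1`, and multiplying by `z(1+u) = w − (1−z)` telescopes to the
right-hand side.
-/

namespace Lam

noncomputable def z : ℚ[X]⟦X⟧ := PowerSeries.X

noncomputable def u : ℚ[X]⟦X⟧ := PowerSeries.C Polynomial.X

noncomputable def v : ℚ[X]⟦X⟧ := PowerSeries.invOfUnit w 1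

lemma w_def : w = 1 + z * u := rfl

lemma C_one_add_X : PowerSeries.C (1 + Polynomial.X) = 1 + u := by
  rw [map_add, map_one]; rfl

lemma w_mul_v : w * v = 1 :=
  PowerSeries.mul_invOfUnit _ _ (by simp [w])

lemma u_ne_zero : u ≠ 0 := by
  intro h
  simpa [u] using congrArg (PowerSeries.coeff 0) h

noncomputable def evalU0 : ℚ[X]⟦X⟧ →+* ℚ[X]⟦X⟧ :=
  PowerSeries.map (Polynomial.C.comp (Polynomial.evalRingHom 0))

@[simp] lemma evalU0_z : evalU0 z = z := PowerSeries.map_X _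

@[simp] lemma evalU0_u : evalU0 u = 0 := by simp [evalU0, u]

@[simp] lemma evalU0_w : evalU0 w = 1 := by simp [w_def]

@[simp] lemma evalU0_v : evalU0 v = 1 := by
  simpa using congrArg evalU0 w_mul_v

noncomputable def divU (H : ℚ[X]⟦X⟧) : ℚ[X]⟦X⟧ :=
  PowerSeries.mk fun n =>
    (PowerSeries.coeff n H - Polynomial.C ((PowerSeries.coeff n H).eval 0)) /ₘ Polynomial.X

lemma u_mul_divU (H : ℚ[X]⟦X⟧) : u * divU H = H - evalU0 H := by
  refine PowerSeries.ext fun n => ?_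
  rw [u, PowerSeries.coeff_C_mul, divU, PowerSeries.coeff_mk, map_sub, evalU0,
    PowerSeries.coeff_map]
  set p := PowerSeries.coeff n H - Polynomial.C ((PowerSeries.coeff n H).eval 0)
  have hp : p %ₘ Polynomial.X = 0 :=
    (Polynomial.modByMonic_eq_zero_iff_dvd Polynomial.monic_X).2 <|
      Polynomial.X_dvd_iff.2 (by simp [p, Polynomial.coeff_zero_eq_eval_zero])
  simpa [hp] using Polynomial.modByMonic_add_div p Polynomial.X

noncomputable def T (F : ℚ[X]⟦X⟧) : ℚ[X]⟦X⟧ := w * divU ((1 + u) * F)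

lemma Lam_one_add_u_mul (F : ℚ[X]⟦X⟧) : Lam ((1 + u) * F) = (1 + u) * T F := by
  show PowerSeries.C (1 + Polynomial.X) * w * divU ((1 + u) * F) = _
  rw [C_one_add_X, T, mul_assoc]

lemma iterate_Lam_one_add_u_mul (k : ℕ) (F : ℚ[X]⟦X⟧) :
    Lam^[k] ((1 + u) * F) = (1 + u) * T^[k] F :=
  (Function.Semiconj.iterate_right (f := ((1 + u) * ·))
    (fun F => (Lam_one_add_u_mul F).symm) k F).symm

lemma u_mul_T (F : ℚ[X]⟦X⟧) : u * T F = w * ((1 + u) * F - evalU0 F) := by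
  rw [T, mul_left_comm, u_mul_divU, map_mul, map_add, map_one, evalU0_u, add_zero, one_mul]

lemma T_eq_of_u_mul {F R : ℚ[X]⟦X⟧} (h : u * R = w * ((1 + u) * F - evalU0 F)) : T F = R :=
  mul_left_cancel₀ u_ne_zero ((u_mul_T F).trans h.symm)

lemma T_add (F G : ℚ[X]⟦X⟧) : T (F + G) = T F + T G :=
  T_eq_of_u_mul (by rw [mul_add, u_mul_T, u_mul_T, map_add]; ring)

lemma T_mul {c : ℚ[X]⟦X⟧} (hc : evalU0 c = c) (F : ℚ[X]⟦X⟧) : T (c * F) = c * T F :=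
  T_eq_of_u_mul (by rw [mul_left_comm, u_mul_T, map_mul, hc]; ring)

lemma T_one : T 1 = w :=
  T_eq_of_u_mul (by rw [map_one]; ring)

lemma T_of_evalU0 {c : ℚ[X]⟦X⟧} (hc : evalU0 c = c) : T c = c * w := by
  simpa [T_one] using T_mul hc 1

lemma T_v_mul (F : ℚ[X]⟦X⟧) : T (v * F) = v * T F - z * evalU0 F :=
  T_eq_of_u_mul (by
    rw [mul_sub, mul_left_comm, u_mul_T, map_mul, evalU0_v, one_mul]
    linear_combination (evalU0 F) * w_def - (evalU0 F) * w_mul_v)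

lemma T_w_mul (F : ℚ[X]⟦X⟧) : T (w * F) = w * T F + z * w * evalU0 F :=
  T_eq_of_u_mul (by
    rw [mul_add, mul_left_comm, u_mul_T, map_mul, evalU0_w, one_mul]
    linear_combination (-(w * evalU0 F)) * w_def)

/-- With `negPart` and `posPart` below, `T^k(v^(k+d))` equals
`(1-z)^k v^d + ∑_{1 ≤ i ≤ d} coef k i · v^(d-i) + ∑_{a < k} coef a d · w^(k-a)`. -/
noncomputable def coef : ℕ → ℕ → ℚ[X]⟦X⟧
  | 0, _ => 0
  | k + 1, r => coef k r - z * ((1 - z) ^ k + ∑ i ∈ Finset.range r, coef k (i + 1))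

noncomputable def negPart (k : ℕ) : ℕ → ℚ[X]⟦X⟧
  | 0 => (1 - z) ^ k
  | d + 1 => v * negPart k d + coef k (d + 1)

noncomputable def posPart (d : ℕ) : ℕ → ℚ[X]⟦X⟧
  | 0 => 0
  | k + 1 => w * (posPart d k + coef k d)

@[simp] lemma evalU0_coef (k r : ℕ) : evalU0 (coef k r) = coef k r := by
  induction k generalizing r with
  | zero => simp [coef]
  | succ k ih => simp [coef, ih]

lemma evalU0_negPart (k d : ℕ) :
    evalU0 (negPart k d) = (1 - z) ^ k + ∑ i ∈ Finset.range d, coef k (i + 1) := by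
  induction d with
  | zero => simp [negPart]
  | succ d ih =>
    rw [negPart, map_add, map_mul, ih, evalU0_v, evalU0_coef, Finset.sum_range_succ]
    ring

lemma evalU0_posPart (d k : ℕ) : evalU0 (posPart d k) = ∑ a ∈ Finset.range k, coef a d := by
  induction k with
  | zero => simp [posPart]
  | succ k ih =>
    rw [posPart, map_mul, map_add, ih, evalU0_w, evalU0_coef, Finset.sum_range_succ]
    ring

lemma coef_zero_right (k : ℕ) : coef k 0 = (1 - z) ^ k - 1 := by
  induction k with
  | zero => simp [coef]
  | succ k ih =>
    rw [coef, ih, Finset.sum_range_zero, add_zero]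
    ring

lemma coef_eq_coef_succ_add (a d : ℕ) :
    coef a d = coef a (d + 1) + z * ∑ b ∈ Finset.range a, coef b (d + 1) := by
  induction a with
  | zero => simp [coef]
  | succ a ih =>
    rw [coef, coef, ih, Finset.sum_range_succ, Finset.sum_range_succ]
    ring

lemma negPart_zero_left (d : ℕ) : negPart 0 d = v ^ d := by
  induction d with
  | zero => simp [negPart]
  | succ d ih => simp [negPart, ih, coef, pow_succ, mul_comm]

lemma T_negPart (k d : ℕ) : T (negPart k (d + 1)) = negPart (k + 1) d + coef k (d + 1) * w := by
  induction d with
  | zero =>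
    have hv : T v = 1 - z := by simpa [T_one, mul_comm v w, w_mul_v] using T_v_mul 1
    rw [negPart, negPart, negPart, T_add, mul_comm, T_mul (by simp), hv,
      T_of_evalU0 (evalU0_coef k 1), pow_succ]
  | succ d ih =>
    rw [negPart.eq_2 k (d + 1), T_add, T_v_mul, ih, T_of_evalU0 (evalU0_coef _ _),
      evalU0_negPart, negPart.eq_2 (k + 1) d, coef]
    linear_combination coef k (d + 1) * w_mul_v

lemma T_posPart (d k : ℕ) : T (posPart (d + 1) k) + coef k (d + 1) * w = posPart d (k + 1) := by
  induction k with
  | zero => simp [posPart, coef, T_of_evalU0]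
  | succ k ih =>
    rw [posPart, T_w_mul, T_add, T_of_evalU0 (evalU0_coef _ _), ih, map_add, evalU0_posPart,
      evalU0_coef, posPart.eq_2 d (k + 1), coef_eq_coef_succ_add (k + 1) d, Finset.sum_range_succ]
    ring

lemma T_iterate_v_pow (k d : ℕ) : T^[k] (v ^ (k + d)) = negPart k d + posPart d k := by
  induction k generalizing d with
  | zero => simp [negPart_zero_left, posPart]
  | succ k ih =>
    rw [Function.iterate_succ_apply', show k + 1 + d = k + (d + 1) by omega, ih, T_add,
      T_negPart, ← T_posPart]
    ring

lemma u_mul_one_sub_z_mul_geom_sum (n : ℕ) :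
    u * (1 - z * ∑ j ∈ Finset.range n, w ^ j) = 1 + u - w ^ n := by
  linear_combination (∑ j ∈ Finset.range n, w ^ j) * w_def - geom_sum_mul w n

lemma w_sub_mul_diagonal (n : ℕ) :
    (w - (1 - z)) * ((1 - z) ^ n + posPart 0 n)
      = w * (1 - z * ∑ j ∈ Finset.range n, w ^ j) - (1 - z) ^ (n + 1) := by
  induction n with
  | zero => simp [posPart]
  | succ n ih =>
    rw [posPart, coef_zero_right, Finset.sum_range_succ]
    linear_combination w * ih - w * z * geom_sum_mul w n

end Lam

/-- `wi` is `1/(1+zu)` and `G` is `((1+u) − (1+zu)^(m+1))/u`, so `w * G` is the first term of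
the right-hand side. -/
theorem Lam_iterate_main_general (m : ℕ)
    (wi : PowerSeries (Polynomial ℚ)) (hwi : w * wi = 1)
    (G : PowerSeries (Polynomial ℚ))
    (hG : PowerSeries.C (R := Polynomial ℚ) Polynomial.X * G
        = PowerSeries.C (R := Polynomial ℚ) (1 + Polynomial.X) - w^(m+1)) :
    PowerSeries.X * (Lam^[m+1] (PowerSeries.C (R := Polynomial ℚ) (1 + Polynomial.X) * wi^(m+1)))
      = w * G - (1 - PowerSeries.X)^(m+2) := by
  obtain rfl : wi = Lam.v :=
    calc wi = Lam.v * w * wi := by rw [mul_comm Lam.v, Lam.w_mul_v, one_mul]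
      _ = Lam.v := by rw [mul_assoc, hwi, mul_one]
  obtain rfl : G = 1 - Lam.z * ∑ j ∈ Finset.range (m + 1), w ^ j := by
    refine mul_left_cancel₀ Lam.u_ne_zero ?_
    rw [Lam.u_mul_one_sub_z_mul_geom_sum, ← Lam.C_one_add_X]
    exact hG
  rw [Lam.C_one_add_X, Lam.iterate_Lam_one_add_u_mul,
    (Lam.T_iterate_v_pow (m + 1) 0 : Lam.T^[m + 1] (Lam.v ^ (m + 1)) = _), Lam.negPart]
  change Lam.z * _ = _ - (1 - Lam.z) ^ (m + 2)
  linear_combination Lam.w_sub_mul_diagonal (m + 1)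
    - ((1 - Lam.z) ^ (m + 1) + Lam.posPart 0 (m + 1)) * Lam.w_def

/-- For m ≥ 1, z·Λ^{(m+1)}((1+u)/(1+zu)^{m+1})
= ((1+u)(1+zu)/u)·(1 − (1+zu)^{m+1}/(1+u)) − (1−z)^{m+2}.
Here `wi` = 1/(1+zu), and `G` = ((1+u) − (1+zu)^{m+1})/u, characterized by u·G = (1+u) − w^{m+1},
so that the right-hand side equals w·G − (1−z)^{m+2}. -/
theorem Lam_iterate_main (m : ℕ) (hm : 1 ≤ m)
    (wi : PowerSeries (Polynomial ℚ)) (hwi : w * wi = 1)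
    (G : PowerSeries (Polynomial ℚ))
    (hG : PowerSeries.C (R := Polynomial ℚ) Polynomial.X * G
        = PowerSeries.C (R := Polynomial ℚ) (1 + Polynomial.X) - w^(m+1)) :
    PowerSeries.X * (Lam^[m+1] (PowerSeries.C (R := Polynomial ℚ) (1 + Polynomial.X) * wi^(m+1)))
      = w * G - (1 - PowerSeries.X)^(m+2) :=
  Lam_iterate_main_general m wi hwi G hG
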